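/- arXiv:1704.03637 — 2 statements merged into one kernel-verified Lean document; each statement's English description precedes it below -/
import Mathlib

section
/- Let p < q be primes and i a positive integer with q < p^i. If property P₂ holds for m = p^i·q, then (q − 2)·p^i > 2^q. -/
open Polynomial

/-- Property `P₂` for `m`: every squarefree polynomial `f ∈ 𝔽₂[X]` of degree `m`
whose order `o(f)` (the least positive `n` with `f ∣ X^(2^n) - X`) equals `m` is
irreducible. -/
def P2 (m : ℕ) : Prop :=
  ∀ f : Polynomial (ZMod 2), Squarefree f → f.natDegree = m →
    IsLeast {n : ℕ | 0 < n ∧ f ∣ X ^ 2 ^ n - X} m → Irreducible f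

/-!
If `(q - 2) p^i ≤ 2^q`, a counterexample to `P₂(p^i q)` is a product of distinct monic
irreducibles whose degrees sum to `p^i q` and have least common multiple `p^i q`, none of degree
`p^i q`: it is squarefree of order `p^i q` but reducible. Pick `R < pq` with `q ∣ 2p^i + R` and last
base-`p` digit at most `2` (there are only two linear polynomials), and take two factors of degree
`p^i`, `d_e` factors of degree `p^e` where `d_e` is the `e`-th base-`p` digit of `R`, and
`k = p^i - (2p^i + R)/q` factors of degree `q`. Then `kq < (q - 2) p^i ≤ 2^q`, and as
`2^q ≡ 2 [MOD q]` even `kq ≤ 2^q - 2`, which is the number of elements of `𝔽_{2^q}` of degree `q`.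
In general, elements of `𝔽_{2^d}` not fixed by `x ↦ x^(2^e)` for the maximal proper divisors `e`
of `d` have minimal polynomials of degree `d`, and each such polynomial has at most `d` roots;
this gives enough irreducibles of each degree `p^e`.
-/

open Finset

section MonicIrreducible

variable {k : Type*} [Field k] {T : Finset k[X]}

theorem pairwise_isRelPrime_of_monic_irreducible (hT : ∀ g ∈ T, g.Monic ∧ Irreducible g) :
    (T : Set k[X]).Pairwise IsRelPrime := by
  intro g hg h hh hne
  refine (hT g hg).2.isRelPrime_iff_not_dvd.2 fun hdvd => hne ?_
  exact eq_of_monic_of_associated (hT g hg).1 (hT h hh).1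
    ((hT g hg).2.associated_of_dvd (hT h hh).2 hdvd)

theorem squarefree_prod_of_monic_irreducible (hT : ∀ g ∈ T, g.Monic ∧ Irreducible g) :
    Squarefree (∏ g ∈ T, g) :=
  Finset.squarefree_prod_of_pairwise_isCoprime (pairwise_isRelPrime_of_monic_irreducible hT)
    fun g hg => (hT g hg).2.squarefree

theorem prod_dvd_X_pow_card_pow_sub_X_iff [Finite k] (hT : ∀ g ∈ T, g.Monic ∧ Irreducible g)
    {n : ℕ} : ∏ g ∈ T, g ∣ X ^ Nat.card k ^ n - X ↔ T.lcm natDegree ∣ n := by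
  rw [Finset.lcm_dvd_iff]
  constructor
  · intro h g hg
    exact (hT g hg).2.natDegree_dvd_iff_dvd_X_pow_card_pow_sub_X.2
      ((Finset.dvd_prod_of_mem _ hg).trans h)
  · intro h
    refine Finset.prod_dvd_of_coprime ?_ fun g hg =>
      (hT g hg).2.natDegree_dvd_iff_dvd_X_pow_card_pow_sub_X.1 (h g hg)
    exact (pairwise_isRelPrime_of_monic_irreducible hT).mono' fun _ _ => IsRelPrime.isCoprime

end MonicIrreducible

theorem not_P2_of_finset {m : ℕ} (T : Finset (ZMod 2)[X])
    (hT : ∀ g ∈ T, g.Monic ∧ Irreducible g ∧ g.natDegree < m)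
    (hsum : ∑ g ∈ T, g.natDegree = m) (hlcm : T.lcm natDegree = m) : ¬ P2 m := by
  have hmi : ∀ g ∈ T, g.Monic ∧ Irreducible g := fun g hg => ⟨(hT g hg).1, (hT g hg).2.1⟩
  have hdvd : ∀ n, ∏ g ∈ T, g ∣ X ^ 2 ^ n - X ↔ m ∣ n := fun n => by
    simpa [hlcm] using prod_dvd_X_pow_card_pow_sub_X_iff hmi (n := n)
  obtain ⟨g, hg⟩ : T.Nonempty := by
    rw [Finset.nonempty_iff_ne_empty]
    rintro rfl
    simp at hlcm hsum
    omega
  have hm : 0 < m := (Nat.zero_le _).trans_lt (hT g hg).2.2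
  intro hP2
  have hirr := hP2 (∏ g ∈ T, g) (squarefree_prod_of_monic_irreducible hmi)
    (by rw [natDegree_prod_of_monic _ _ fun g hg => (hmi g hg).1, hsum])
    ⟨⟨hm, (hdvd m).2 dvd_rfl⟩, fun n hn => Nat.le_of_dvd hn.1 ((hdvd n).1 hn.2)⟩
  have hassoc := (hmi g hg).2.associated_of_dvd hirr (Finset.dvd_prod_of_mem _ hg)
  have := (hT g hg).2.2
  rw [natDegree_eq_of_degree_eq (degree_eq_degree_of_associated hassoc),
    natDegree_prod_of_monic _ _ fun g hg => (hmi g hg).1, hsum] at this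
  exact lt_irrefl _ this

theorem not_P2_mul_of_coprime {a b : ℕ} (hab : a.Coprime b) (ha : 1 < a) (hb : 1 < b)
    {S T : Finset (ZMod 2)[X]} (hST : Disjoint S T)
    (hS : ∀ g ∈ S, g.Monic ∧ Irreducible g ∧ g.natDegree ∣ a)
    (hT : ∀ g ∈ T, g.Monic ∧ Irreducible g ∧ g.natDegree ∣ b)
    (hSl : S.lcm natDegree = a) (hTl : T.lcm natDegree = b)
    (hsum : ∑ g ∈ S, g.natDegree + ∑ g ∈ T, g.natDegree = a * b) : ¬ P2 (a * b) := by
  refine not_P2_of_finset (S ∪ T) (fun g hg => ?_) (by rwa [sum_union hST])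
    (by rw [lcm_union, hSl, hTl]; exact hab.lcm_eq_mul)
  rcases mem_union.1 hg with hg | hg
  · exact ⟨(hS g hg).1, (hS g hg).2.1,
      (Nat.le_of_dvd (by omega) (hS g hg).2.2).trans_lt (lt_mul_of_one_lt_right (by omega) hb)⟩
  · exact ⟨(hT g hg).1, (hT g hg).2.1,
      (Nat.le_of_dvd (by omega) (hT g hg).2.2).trans_lt (lt_mul_of_one_lt_left (by omega) ha)⟩

section Counting

variable {k L : Type*} [Field k] [Field L] [Algebra k L]

theorem natDegree_minpoly_eq_finrank [Finite k] [FiniteDimensional k L] {E : Finset ℕ}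
    (hE : ∀ δ, δ ∣ Module.finrank k L → δ ≠ Module.finrank k L → ∃ e ∈ E, δ ∣ e) {x : L}
    (hx : ∀ e ∈ E, x ^ Nat.card k ^ e ≠ x) : (minpoly k x).natDegree = Module.finrank k L := by
  have hint : IsIntegral k x := .of_finite k x
  by_contra hne
  obtain ⟨e, he, hdvd⟩ := hE _ (minpoly.degree_dvd hint) hne
  have := (minpoly.irreducible hint).natDegree_dvd_iff_dvd_X_pow_card_pow_sub_X.1 hdvd
  exact hx e he (by simpa [sub_eq_zero] using minpoly.dvd_iff.1 this)

variable [DecidableEq L]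

theorem card_filter_aeval_eq_zero_le (s : Finset L) {g : k[X]} (hg : g ≠ 0) :
    #{x ∈ s | aeval x g = 0} ≤ g.natDegree := by
  calc #{x ∈ s | aeval x g = 0} ≤ (g.map (algebraMap k L)).natDegree := by
        refine card_le_degree_of_subset_roots fun x hx => ?_
        rw [mem_roots (Polynomial.map_ne_zero hg), IsRoot, eval_map_algebraMap]
        exact (mem_filter.1 hx).2
    _ = g.natDegree := natDegree_map _

theorem card_filter_pow_eq_self_le [Fintype L] {n : ℕ} (hn : 1 < n) :
    #{x : L | x ^ n = x} ≤ n := by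
  calc #{x : L | x ^ n = x} = #{x ∈ (univ : Finset L) | aeval x (X ^ n - X : L[X]) = 0} := by
        simp [sub_eq_zero]
    _ ≤ n := (card_filter_aeval_eq_zero_le _ (FiniteField.X_pow_card_sub_X_ne_zero L hn)).trans
        (FiniteField.X_pow_card_sub_X_natDegree_eq L hn).le

theorem exists_finset_monic_irreducible_natDegree_eq_finrank [Finite k] [Fintype L] (E : Finset ℕ)
    (hE0 : ∀ e ∈ E, e ≠ 0)
    (hE : ∀ δ, δ ∣ Module.finrank k L → δ ≠ Module.finrank k L → ∃ e ∈ E, δ ∣ e) {t : ℕ}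
    (ht : t * Module.finrank k L + ∑ e ∈ E, Nat.card k ^ e ≤ Nat.card k ^ Module.finrank k L) :
    ∃ T : Finset k[X], #T = t ∧
      ∀ g ∈ T, g.Monic ∧ Irreducible g ∧ g.natDegree = Module.finrank k L := by
  classical
  set d := Module.finrank k L
  set Q := Nat.card k
  set S : Finset L := {x | ∀ e ∈ E, x ^ Q ^ e ≠ x}
  have hS : Q ^ d ≤ #S + ∑ e ∈ E, Q ^ e := by
    calc Q ^ d = #(S ∪ E.biUnion fun e => {x : L | x ^ Q ^ e = x}) := by
          rw [← Module.natCard_eq_pow_finrank, Nat.card_eq_fintype_card, ← card_univ]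
          congr 1
          ext x
          simp [S, or_iff_not_imp_left]
      _ ≤ #S + ∑ e ∈ E, Q ^ e := (card_union_le _ _).trans <| Nat.add_le_add_left
          (card_biUnion_le.trans <| sum_le_sum fun e he =>
            card_filter_pow_eq_self_le (Nat.one_lt_pow (hE0 e he) (Finite.one_lt_card (α := k)))) _
  have hdeg : ∀ x ∈ S, (minpoly k x).natDegree = d := fun x hx =>
    natDegree_minpoly_eq_finrank hE (mem_filter.1 hx).2
  have hfiber : #S ≤ d * #(S.image (minpoly k)) := by
    refine card_le_mul_card_image S d fun g hg => ?_
    obtain ⟨x, hx, rfl⟩ := mem_image.1 hg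
    calc #{y ∈ S | minpoly k y = minpoly k x}
        ≤ #{y ∈ S | aeval y (minpoly k x) = 0} :=
          card_le_card <| monotone_filter_right _ fun y _ hy => hy ▸ minpoly.aeval k y
      _ ≤ d := (card_filter_aeval_eq_zero_le S (minpoly.ne_zero (.of_finite k x))).trans
          (hdeg x hx).le
  have hd : 0 < d := Module.finrank_pos
  obtain ⟨T, hTS, rfl⟩ := exists_subset_card_eq (s := S.image (minpoly k)) (n := t)
    (le_of_mul_le_mul_left (by nlinarith) hd)
  refine ⟨T, rfl, fun g hg => ?_⟩
  obtain ⟨x, hx, rfl⟩ := mem_image.1 (hTS hg)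
  exact ⟨minpoly.monic (.of_finite k x), minpoly.irreducible (.of_finite k x), hdeg x hx⟩

end Counting

theorem exists_finset_monic_irreducible_natDegree_eq_one {k : Type*} [Field k] [Fintype k]
    {t : ℕ} (ht : t ≤ Fintype.card k) :
    ∃ T : Finset k[X], #T = t ∧ ∀ g ∈ T, g.Monic ∧ Irreducible g ∧ g.natDegree = 1 := by
  classical
  obtain ⟨s, -, rfl⟩ := exists_subset_card_eq (s := (univ : Finset k)) (n := t) (by simpa using ht)
  refine ⟨s.image (X - C ·), card_image_of_injective _ (sub_right_injective.comp C_injective), ?_⟩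
  rintro _ h
  obtain ⟨a, -, rfl⟩ := mem_image.1 h
  exact ⟨monic_X_sub_C a, irreducible_X_sub_C a, natDegree_X_sub_C a⟩

theorem exists_finset_monic_irreducible_natDegree_eq_prime_pow_succ (ℓ : ℕ) [Fact ℓ.Prime]
    {r e t : ℕ} (hr : r.Prime) (ht : t * r ^ (e + 1) + ℓ ^ r ^ e ≤ ℓ ^ r ^ (e + 1)) :
    ∃ T : Finset (ZMod ℓ)[X], #T = t ∧
      ∀ g ∈ T, g.Monic ∧ Irreducible g ∧ g.natDegree = r ^ (e + 1) := by
  classical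
  let := Fintype.ofFinite (GaloisField ℓ (r ^ (e + 1)))
  have hfin := GaloisField.finrank ℓ (pow_ne_zero (e + 1) hr.ne_zero)
  rw [← hfin]
  refine exists_finset_monic_irreducible_natDegree_eq_finrank {r ^ e} (by simp [hr.ne_zero])
    (fun δ hδ hne => ?_) (by simpa [hfin] using ht)
  rw [hfin] at hδ hne
  obtain ⟨l, hl, rfl⟩ := (Nat.dvd_prime_pow hr).1 hδ
  exact ⟨r ^ e, mem_singleton_self _, pow_dvd_pow r (by grind)⟩

theorem exists_finset_of_counts {k ι : Type*} [CommRing k] (s : Finset ι) (deg c : ι → ℕ)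
    (hdeg : Set.InjOn deg s)
    (h : ∀ j ∈ s, ∃ T : Finset k[X], #T = c j ∧
      ∀ g ∈ T, g.Monic ∧ Irreducible g ∧ g.natDegree = deg j) :
    ∃ T : Finset k[X], (∀ g ∈ T, g.Monic ∧ Irreducible g ∧ ∃ j ∈ s, g.natDegree = deg j) ∧
      (∀ j ∈ s, c j ≠ 0 → ∃ g ∈ T, g.natDegree = deg j) ∧
      ∑ g ∈ T, g.natDegree = ∑ j ∈ s, c j * deg j := by
  classical
  choose! T hTcard hT using h
  have hdisj : (s : Set ι).PairwiseDisjoint T := fun j hj j' hj' hne =>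
    disjoint_left.2 fun g hg hg' =>
      hne (hdeg hj hj' (((hT j hj g hg).2.2).symm.trans (hT j' hj' g hg').2.2))
  refine ⟨s.biUnion T, fun g hg => ?_, fun j hj hc => ?_, ?_⟩
  · obtain ⟨j, hj, hg⟩ := mem_biUnion.1 hg
    exact ⟨(hT j hj g hg).1, (hT j hj g hg).2.1, j, hj, (hT j hj g hg).2.2⟩
  · obtain ⟨g, hg⟩ := card_pos.1 (by rw [hTcard j hj]; omega)
    exact ⟨g, mem_biUnion.2 ⟨j, hj, hg⟩, (hT j hj g hg).2.2⟩
  · rw [sum_biUnion hdisj]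
    refine sum_congr rfl fun j hj => ?_
    rw [sum_congr rfl fun g hg => (hT j hj g hg).2.2, sum_const, hTcard j hj, smul_eq_mul]

theorem mul_succ_add_two_le_two_pow_succ (n : ℕ) : n * (n + 1) + 2 ≤ 2 ^ (n + 1) := by
  induction n with
  | zero => norm_num
  | succ n ih =>
    rw [pow_succ]
    nlinarith [Nat.le_mul_self n]

theorem succ_mul_sq_add_two_pow_le_four_pow {a : ℕ} (ha : 2 ≤ a) :
    (a + 1) * a ^ 2 + 2 ^ a ≤ 4 ^ a := by
  induction a, ha using Nat.le_induction with
  | base => norm_num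
  | succ a ha ih =>
    have h : (a + 1 + 1) * (a + 1) ^ 2 ≤ 4 * ((a + 1) * a ^ 2) := by nlinarith
    rw [pow_succ 2, pow_succ 4]
    omega

theorem mul_pow_succ_add_two_pow_pow_le {p e c : ℕ} (hp : 2 ≤ p)
    (hc : c ≤ p - 1 ∨ (e ≠ 0 ∧ c ≤ p + 1)) : c * p ^ (e + 1) + 2 ^ p ^ e ≤ 2 ^ p ^ (e + 1) := by
  rcases e with _ | e
  · have := mul_succ_add_two_le_two_pow_succ (p - 1)
    rw [Nat.sub_add_cancel (by omega)] at this
    simp only [zero_add, pow_one, pow_zero]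
    nlinarith [hc.resolve_right (by simp)]
  · set a := p ^ (e + 1)
    have hpa : p ≤ a := Nat.le_self_pow (by simp) p
    have hc : c ≤ p + 1 := by omega
    calc c * p ^ (e + 1 + 1) + 2 ^ a ≤ (a + 1) * a ^ 2 + 2 ^ a := by
          rw [pow_succ', ← show a = p ^ (e + 1) from rfl]
          refine Nat.add_le_add_right ?_ _
          calc c * (p * a) ≤ (a + 1) * (a * a) := by gcongr; omega
            _ = (a + 1) * a ^ 2 := by ring
      _ ≤ 4 ^ a := succ_mul_sq_add_two_pow_le_four_pow (by omega)
      _ = 2 ^ (2 * a) := by rw [pow_mul]; norm_num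
      _ ≤ 2 ^ p ^ (e + 1 + 1) := by
          rw [pow_succ', ← show a = p ^ (e + 1) from rfl]
          exact Nat.pow_le_pow_right (by norm_num) (by nlinarith)

theorem sum_range_div_pow_mod_mul_pow (m p n : ℕ) :
    ∑ e ∈ range n, m / p ^ e % p * p ^ e = m % p ^ n := by
  induction n with
  | zero => simp [Nat.mod_one]
  | succ n ih => rw [sum_range_succ, ih, Nat.mod_pow_succ, mul_comm]

theorem add_two_le_two_pow_of_dvd {q n : ℕ} (hq : q.Prime) (hq2 : q ≠ 2) (hdvd : q ∣ n)
    (hn : n ≤ 2 ^ q) : n + 2 ≤ 2 ^ q := by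
  have hq3 : 3 ≤ q := by have := hq.two_le; omega
  have hfermat : 2 ^ q % q = 2 := by
    have : Fact q.Prime := ⟨hq⟩
    have h := (ZMod.natCast_eq_natCast_iff' (2 ^ q) 2 q).1 (by push_cast; exact ZMod.pow_card 2)
    rwa [Nat.mod_eq_of_lt (a := 2) (by omega)] at h
  obtain ⟨a, rfl⟩ := hdvd
  have h2 := Nat.div_add_mod (2 ^ q) q
  rw [hfermat] at h2
  by_contra! hlt
  have hab : 2 ^ q / q < a := by nlinarith
  nlinarith

theorem exists_dvd_two_mul_add {p q P : ℕ} (hp : p.Prime) (hq : q.Prime) (hpq : p < q)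
    (hP : p * p ≤ P) : ∃ R, q ∣ 2 * P + R ∧ R % p ≤ 2 ∧ R < p * q ∧ 2 * P + R < P * q := by
  have hdvd_of_modEq : ∀ R, R ≡ (q - 2) * P [MOD q] → q ∣ 2 * P + R := fun R hR =>
    Nat.modEq_zero_iff_dvd.1 <| (hR.add_left (2 * P)).trans <|
      Nat.modEq_zero_iff_dvd.2 ⟨P, by zify [hq.two_le]; ring⟩
  have hp2 := hp.two_le
  have hq3 : 3 ≤ q := by omega
  have hP4 : 4 ≤ P := by nlinarith
  -- for `p ≤ 3` any `R < q` will do; otherwise take `p ∣ R` by the Chinese remainder theorem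
  by_cases hp3 : p ≤ 3
  · refine ⟨(q - 2) * P % q, hdvd_of_modEq _ (Nat.mod_modEq _ _),
      Nat.le_of_lt_succ ((Nat.mod_lt _ hp.pos).trans_le hp3), ?_, ?_⟩
    · exact (Nat.mod_lt _ (by omega)).trans_le (Nat.le_mul_of_pos_left q (by omega))
    · have := Nat.mod_lt ((q - 2) * P) (show 0 < q by omega)
      have : q + 2 * P ≤ P * q := by nlinarith
      omega
  · have hco : p.Coprime q := (Nat.coprime_primes hp hq).2 hpq.ne
    set R := Nat.chineseRemainder hco 0 ((q - 2) * P)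
    have hRlt : R < p * q := Nat.chineseRemainder_lt_mul hco 0 _ hp.ne_zero hq.ne_zero
    refine ⟨R, hdvd_of_modEq R R.2.2, by rw [R.2.1]; simp, hRlt, ?_⟩
    have : p * q + 2 * P ≤ P * q := by nlinarith
    omega

theorem exists_mul_add_two_mul_add_eq {p q P : ℕ} (hp : p.Prime) (hq : q.Prime) (hpq : p < q)
    (hP : p * p ≤ P) : ∃ k R, 0 < k ∧ k * q + (2 * P + R) = P * q ∧ R % p ≤ 2 ∧ R < p * q := by
  obtain ⟨R, ⟨s, hs⟩, hRp, hRpq, hRlt⟩ := exists_dvd_two_mul_add hp hq hpq hP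
  have hsP : s < P := by nlinarith
  refine ⟨P - s, R, by omega, ?_, hRp, hRpq⟩
  rw [hs, Nat.sub_mul, mul_comm q s]
  exact Nat.sub_add_cancel (Nat.mul_le_mul_right q hsP.le)

theorem exists_finset_sum_natDegree_eq_two_mul_prime_pow_add {p i R : ℕ} (hp : p.Prime)
    (hi : 2 ≤ i) (hR : R < p ^ (i + 1)) (hRp : R % p ≤ 2) :
    ∃ T : Finset (ZMod 2)[X], (∀ g ∈ T, g.Monic ∧ Irreducible g ∧ g.natDegree ∣ p ^ i) ∧
      T.lcm natDegree = p ^ i ∧ ∑ g ∈ T, g.natDegree = 2 * p ^ i + R := by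
  set c : ℕ → ℕ := fun e => R / p ^ e % p + if e = i then 2 else 0
  have havail : ∀ e ∈ range (i + 1), ∃ T : Finset (ZMod 2)[X], #T = c e ∧
      ∀ g ∈ T, g.Monic ∧ Irreducible g ∧ g.natDegree = p ^ e := by
    intro e he
    rcases e with _ | e
    · refine exists_finset_monic_irreducible_natDegree_eq_one ?_
      simpa [c, show 0 ≠ i by omega] using hRp
    · have hdigit := Nat.mod_lt (R / p ^ (e + 1)) hp.pos
      refine exists_finset_monic_irreducible_natDegree_eq_prime_pow_succ 2 hp
        (mul_pow_succ_add_two_pow_pow_le hp.two_le ?_)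
      simp only [c]
      split_ifs with hei
      · exact .inr ⟨by omega, by omega⟩
      · exact .inl (by omega)
  obtain ⟨T, hT, hcover, hsum⟩ := exists_finset_of_counts (range (i + 1)) (p ^ ·) c
    (Nat.pow_right_injective hp.two_le).injOn havail
  have hdvd : ∀ g ∈ T, g.natDegree ∣ p ^ i := fun g hg => by
    obtain ⟨-, -, e, he, hg⟩ := hT g hg
    exact hg ▸ pow_dvd_pow p (Nat.lt_succ_iff.1 (mem_range.1 he))
  refine ⟨T, fun g hg => ⟨(hT g hg).1, (hT g hg).2.1, hdvd g hg⟩,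
    Nat.dvd_antisymm (Finset.lcm_dvd hdvd) ?_, ?_⟩
  · obtain ⟨g, hg, hgi⟩ := hcover i (self_mem_range_succ i) (by simp [c])
    exact hgi ▸ Finset.dvd_lcm hg
  · rw [hsum]
    simp only [c, add_mul, sum_add_distrib, sum_range_div_pow_mod_mul_pow, Nat.mod_eq_of_lt hR,
      ite_mul, zero_mul, sum_ite_eq', self_mem_range_succ, if_true, add_comm]

theorem exists_finset_sum_natDegree_eq_mul_prime {q k : ℕ} (hq : q.Prime) (hq2 : q ≠ 2)
    (hk : 0 < k) (hkq : k * q ≤ 2 ^ q) :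
    ∃ T : Finset (ZMod 2)[X], (∀ g ∈ T, g.Monic ∧ Irreducible g ∧ g.natDegree = q) ∧
      T.lcm natDegree = q ∧ ∑ g ∈ T, g.natDegree = k * q := by
  obtain ⟨T, hTcard, hT⟩ := exists_finset_monic_irreducible_natDegree_eq_prime_pow_succ 2 (e := 0)
    hq (by simpa using add_two_le_two_pow_of_dvd hq hq2 (dvd_mul_left q k) hkq)
  simp only [zero_add, pow_one] at hT
  obtain ⟨g, hg⟩ : T.Nonempty := card_pos.1 (by omega)
  refine ⟨T, hT, Nat.dvd_antisymm (Finset.lcm_dvd fun g hg => (hT g hg).2.2 ▸ dvd_rfl)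
    ((hT g hg).2.2 ▸ Finset.dvd_lcm hg), ?_⟩
  rw [sum_congr rfl fun g hg => (hT g hg).2.2, sum_const, hTcard, smul_eq_mul]

theorem stmt_10_general (p q i : ℕ) (hp : p.Prime) (hq : q.Prime) (hpq : p < q)
    (hqi : q < p ^ i) (h : P2 (p ^ i * q)) : (q - 2) * p ^ i > 2 ^ q := by
  by_contra! hcon
  have hi : 2 ≤ i := by
    by_contra! hi
    interval_cases i <;> simp at hqi <;> omega
  obtain ⟨k, R, hk, hsplit, hRp, hRpq⟩ := exists_mul_add_two_mul_add_eq hp hq hpq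
    (by simpa [← pow_two] using Nat.pow_le_pow_right hp.pos hi)
  have hkq : k * q ≤ 2 ^ q := by
    have : (q - 2) * p ^ i + 2 * p ^ i = p ^ i * q := by
      rw [← add_mul, Nat.sub_add_cancel hq.two_le, mul_comm]
    omega
  obtain ⟨Tq, hTq, hTq_lcm, hTq_sum⟩ :=
    exists_finset_sum_natDegree_eq_mul_prime hq (hp.two_le.trans_lt hpq).ne' hk hkq
  obtain ⟨Tp, hTp, hTp_lcm, hTp_sum⟩ := exists_finset_sum_natDegree_eq_two_mul_prime_pow_add hp hi
    (hRpq.trans_le (by rw [pow_succ']; exact Nat.mul_le_mul_left p hqi.le)) hRp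
  have hdisj : Disjoint Tp Tq := disjoint_left.2 fun g hgp hgq => hpq.ne' <|
    (Nat.prime_dvd_prime_iff_eq hq hp).1 <| hq.dvd_of_dvd_pow <| (hTq g hgq).2.2 ▸ (hTp g hgp).2.2
  refine not_P2_mul_of_coprime (Nat.Coprime.pow_left i ((Nat.coprime_primes hp hq).2 hpq.ne))
    (by omega) hq.one_lt hdisj hTp (fun g hg => ?_) hTp_lcm hTq_lcm (by omega) h
  exact (hTq g hg).2.2 ▸ ⟨(hTq g hg).1, (hTq g hg).2.1, dvd_rfl⟩

/-- For primes `p < q` and `i ≥ 1` with `q < p^i`, if `P₂` holds for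
`m = p^i * q` then `(q - 2) * p^i > 2^q`. -/
theorem stmt_10 (p q i : ℕ) (hp : p.Prime) (hq : q.Prime) (hpq : p < q) (hi : 0 < i)
    (hqi : q < p ^ i) (h : P2 (p ^ i * q)) : (q - 2) * p ^ i > 2 ^ q :=
  stmt_10_general p q i hp hq hpq hqi h
end

section
/- Let p be a prime and i a positive integer. Then property P₂ holds for m = p^i: every squarefree polynomial f ∈ 𝔽₂[X] of degree p^i with o(f) = p^i is irreducible. -/
/-!
Over `𝔽_q`, a squarefree `f` divides `X ^ q ^ n - X` exactly when the degree of each irreducible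
factor of `f` divides `n`. If `f` of degree `p ^ i` is reducible, each irreducible factor has degree
a proper divisor of `p ^ i`, hence a divisor of `p ^ (i - 1)`; so `f ∣ X ^ 2 ^ p ^ (i - 1) - X`,
and the order of `f` is less than `p ^ i`.
-/

open Polynomial

theorem Nat.Prime.dvd_pow_pred_of_dvd_pow_of_ne {p i d : ℕ} (hp : p.Prime) (hd : d ∣ p ^ i)
    (hne : d ≠ p ^ i) : d ∣ p ^ (i - 1) := by
  obtain ⟨j, hj, rfl⟩ := (Nat.dvd_prime_pow hp).1 hd
  have hji : j ≠ i := by rintro rfl; exact hne rfl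
  exact pow_dvd_pow p (by omega)

theorem Squarefree.dvd_of_forall_irreducible_dvd {α : Type*} [CommMonoidWithZero α] [Nontrivial α]
    [UniqueFactorizationMonoid α] {a b : α} (ha : Squarefree a)
    (h : ∀ p, Irreducible p → p ∣ a → p ∣ b) : a ∣ b := by
  induction a using WfDvdMonoid.induction_on_irreducible with
  | zero => exact absurd ha not_squarefree_zero
  | unit u hu => exact hu.dvd
  | mul a p _ hp ih =>
    obtain ⟨hpa, -, ha⟩ := squarefree_mul_iff.1 ha
    exact hpa.mul_dvd (h p hp (dvd_mul_right p a))
      (ih ha fun q hq hqa => h q hq (hqa.mul_left p))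

theorem Squarefree.dvd_X_pow_card_pow_sub_X_iff {k : Type*} [Field k] [Finite k] {f : k[X]}
    (hf : Squarefree f) {n : ℕ} :
    f ∣ X ^ Nat.card k ^ n - X ↔ ∀ g, Irreducible g → g ∣ f → g.natDegree ∣ n :=
  ⟨fun hfX _ hg hgf => hg.natDegree_dvd_of_dvd_X_pow_card_pow_sub_X (hgf.trans hfX),
    fun h => hf.dvd_of_forall_irreducible_dvd fun g hg hgf =>
      hg.natDegree_dvd_iff_dvd_X_pow_card_pow_sub_X.1 (h g hg hgf)⟩

/-- For a prime `p` and `i ≥ 1`, property `P₂` holds for `m = p^i`. -/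
theorem stmt_11 (p i : ℕ) (hp : p.Prime) (hi : 0 < i) : P2 (p ^ i) := by
  rintro f hsf hdeg ⟨⟨-, hdvd⟩, hmin⟩
  by_contra hirr
  have hf0 : f ≠ 0 := ne_zero_of_natDegree_gt (n := 0) (hdeg ▸ pow_pos hp.pos i)
  have hcrit (n : ℕ) := hsf.dvd_X_pow_card_pow_sub_X_iff (n := n)
  simp only [Nat.card_zmod] at hcrit
  have hfactors : ∀ g, Irreducible g → g ∣ f → g.natDegree ∣ p ^ (i - 1) := by
    intro g hg hgf
    refine hp.dvd_pow_pred_of_dvd_pow_of_ne ((hcrit _).1 hdvd g hg hgf) fun hg_deg => hirr ?_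
    exact (associated_of_dvd_of_natDegree_le hgf hf0 (hdeg.trans hg_deg.symm).le).irreducible hg
  have hle : p ^ i ≤ p ^ (i - 1) := hmin ⟨pow_pos hp.pos _, (hcrit _).2 hfactors⟩
  exact (Nat.pow_lt_pow_right hp.one_lt (by omega)).not_ge hle
end
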